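/- arXiv:2602.08638 — 2 statements merged into one kernel-verified Lean document; each statement's English description precedes it below -/
import Mathlib

section
/- Let p, q be probability vectors on Fin n (nonnegative entries summing to 1) with q_i > 0 for every i, and define the Kullback–Leibler divergence KL(p‖q) = Σ_i p_i·log(p_i/q_i), with the convention that terms with p_i = 0 contribute 0. Then Pinsker's inequality holds in the form KL(p‖q) ≥ (1/2)·(Σ_i |p_i − q_i|)²; that is, the KL divergence dominates half the squared total-variation (ℓ¹) distance. -/
/-- Kullback–Leibler divergence of two vectors on `Fin n`. Terms with
`p i = 0` contribute `0` since they are multiplied by the zero coefficient. -/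
noncomputable def KLdiv {n : ℕ} (p q : Fin n → ℝ) : ℝ :=
  ∑ i, p i * Real.log (p i / q i)

/-!
With `φ(t) = t log t + 1 - t` (Mathlib's `klFun`) and `Σ pᵢ = Σ qᵢ`, the divergence is
`Σ qᵢ φ(pᵢ / qᵢ)`. For `t ≥ 0` one has `3 (t - 1)² ≤ 2 (t + 2) φ(t)`: the difference has
derivative `4 (t + 1) (log t - 2 (t - 1) / (t + 1))`, which changes sign only at `t = 1`, where
the difference vanishes. Hence `KL(p‖q) ≥ (3/2) Σ (pᵢ - qᵢ)² / (pᵢ + 2 qᵢ)`, and Cauchy–Schwarz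
in Engel form, with `Σ (pᵢ + 2 qᵢ) = 3`, bounds this below by `(1/2) (Σ |pᵢ - qᵢ|)²`.
-/

open Real Set InformationTheory

lemma monotoneOn_log_sub_two_mul_sub_one_div :
    MonotoneOn (fun x : ℝ ↦ log x - 2 * (x - 1) / (x + 1)) (Ioi 0) := by
  have hderiv (x : ℝ) (hx : 0 < x) :
      HasDerivAt (fun x ↦ log x - 2 * (x - 1) / (x + 1)) (x⁻¹ - 4 / (x + 1) ^ 2) x := by
    refine ((hasDerivAt_log hx.ne').sub ((((hasDerivAt_id' x).sub_const 1).const_mul 2).div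
      ((hasDerivAt_id' x).add_const 1) (by positivity))).congr_deriv ?_
    field_simp; ring
  refine monotoneOn_of_hasDerivWithinAt_nonneg (f' := fun x ↦ x⁻¹ - 4 / (x + 1) ^ 2)
    (convex_Ioi 0) (fun x hx ↦ (hderiv x hx).continuousAt.continuousWithinAt)
    (fun x hx ↦ ?_) (fun x hx ↦ ?_)
  · rw [interior_Ioi] at hx
    exact (hderiv x hx).hasDerivWithinAt
  · rw [interior_Ioi, mem_Ioi] at hx
    rw [sub_nonneg, div_le_iff₀ (by positivity), ← div_eq_inv_mul, le_div_iff₀ hx]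
    nlinarith [sq_nonneg (x - 1)]

lemma two_mul_sub_one_div_le_log {x : ℝ} (hx : 1 ≤ x) : 2 * (x - 1) / (x + 1) ≤ log x := by
  have := monotoneOn_log_sub_two_mul_sub_one_div (by norm_num : (1 : ℝ) ∈ Ioi 0)
    (show x ∈ Ioi 0 from by rw [mem_Ioi]; linarith) hx
  norm_num at this
  linarith

lemma log_le_two_mul_sub_one_div {x : ℝ} (hx0 : 0 < x) (hx : x ≤ 1) :
    log x ≤ 2 * (x - 1) / (x + 1) := by
  have := monotoneOn_log_sub_two_mul_sub_one_div hx0 (by norm_num : (1 : ℝ) ∈ Ioi 0) hx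
  norm_num at this
  linarith

lemma hasDerivAt_mul_klFun_sub_sq {x : ℝ} (hx : x ≠ 0) :
    HasDerivAt (fun t ↦ 2 * (t + 2) * klFun t - 3 * (t - 1) ^ 2)
      (4 * (x + 1) * log x - 8 * (x - 1)) x := by
  refine ((((hasDerivAt_id' x).add_const 2).const_mul 2).mul (hasDerivAt_klFun hx) |>.sub
    (((hasDerivAt_id' x).sub_const 1).pow 2 |>.const_mul 3)).congr_deriv ?_
  rw [klFun_apply]; ring

lemma three_mul_sq_sub_one_le_mul_klFun {t : ℝ} (ht : 0 ≤ t) :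
    3 * (t - 1) ^ 2 ≤ 2 * (t + 2) * klFun t := by
  set g : ℝ → ℝ := fun t ↦ 2 * (t + 2) * klFun t - 3 * (t - 1) ^ 2
  set g' : ℝ → ℝ := fun x ↦ 4 * (x + 1) * log x - 8 * (x - 1)
  have hg1 : g 1 = 0 := by simp [g, klFun_one]
  have hg : Continuous g := by fun_prop
  suffices 0 ≤ g t by simp only [g] at this; linarith
  rcases le_total t 1 with h | h
  · have : AntitoneOn g (Icc 0 1) := by
      refine antitoneOn_of_hasDerivWithinAt_nonpos (f' := g') (convex_Icc 0 1) hg.continuousOn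
        (fun x hx ↦ ?_) (fun x hx ↦ ?_)
      · rw [interior_Icc] at hx
        exact (hasDerivAt_mul_klFun_sub_sq hx.1.ne').hasDerivWithinAt
      · rw [interior_Icc] at hx
        have := log_le_two_mul_sub_one_div hx.1 hx.2.le
        rw [le_div_iff₀ (by linarith [hx.1])] at this
        linarith
    exact hg1 ▸ this ⟨ht, h⟩ ⟨zero_le_one, le_rfl⟩ h
  · have : MonotoneOn g (Ici 1) := by
      refine monotoneOn_of_hasDerivWithinAt_nonneg (f' := g') (convex_Ici 1) hg.continuousOn
        (fun x hx ↦ ?_) (fun x hx ↦ ?_)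
      · rw [interior_Ici, mem_Ioi] at hx
        exact (hasDerivAt_mul_klFun_sub_sq (by positivity)).hasDerivWithinAt
      · rw [interior_Ici, mem_Ioi] at hx
        have := two_mul_sub_one_div_le_log hx.le
        rw [div_le_iff₀ (by positivity)] at this
        linarith
    exact hg1 ▸ this self_mem_Ici h h

lemma mul_klFun_div (p : ℝ) {q : ℝ} (hq : q ≠ 0) :
    q * klFun (p / q) = p * log (p / q) + q - p := by
  rw [klFun_apply]; field_simp

lemma three_halves_mul_sq_sub_div_le_mul_klFun_div {p q : ℝ} (hp : 0 ≤ p) (hq : 0 < q) :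
    3 / 2 * ((p - q) ^ 2 / (p + 2 * q)) ≤ q * klFun (p / q) := by
  have key := three_mul_sq_sub_one_le_mul_klFun (div_nonneg hp hq.le)
  have hpq : 0 < p + 2 * q := by linarith
  rw [← mul_div_assoc, div_le_iff₀ hpq]
  calc 3 / 2 * (p - q) ^ 2 = q ^ 2 / 2 * (3 * (p / q - 1) ^ 2) := by field_simp
    _ ≤ q ^ 2 / 2 * (2 * (p / q + 2) * klFun (p / q)) := by gcongr
    _ = q * klFun (p / q) * (p + 2 * q) := by field_simp

lemma KLdiv_eq_sum_mul_klFun {n : ℕ} {p q : Fin n → ℝ} (hq : ∀ i, q i ≠ 0)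
    (hpq : ∑ i, p i = ∑ i, q i) : KLdiv p q = ∑ i, q i * klFun (p i / q i) := by
  simp only [KLdiv, mul_klFun_div _ (hq _), Finset.sum_sub_distrib, Finset.sum_add_distrib, hpq,
    add_sub_cancel_right]

/-- **Pinsker's inequality.**
For probability vectors `p, q` on `Fin n` with `q i > 0` for all `i`,
`KL(p‖q) ≥ (1/2)·(Σ_i |p i − q i|)²`. -/
theorem pinsker_inequality
    {n : ℕ} (p q : Fin n → ℝ)
    (hp0 : ∀ i, 0 ≤ p i) (hp1 : ∑ i, p i = 1)
    (hq0 : ∀ i, 0 < q i) (hq1 : ∑ i, q i = 1) :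
    (1 / 2) * (∑ i, |p i - q i|) ^ 2 ≤ KLdiv p q := by
  have hmass : ∑ i, (p i + 2 * q i) = 3 := by
    rw [Finset.sum_add_distrib, ← Finset.mul_sum, hp1, hq1]; norm_num
  calc (1 / 2) * (∑ i, |p i - q i|) ^ 2
      = 3 / 2 * ((∑ i, |p i - q i|) ^ 2 / ∑ i, (p i + 2 * q i)) := by rw [hmass]; ring
    _ ≤ 3 / 2 * ∑ i, |p i - q i| ^ 2 / (p i + 2 * q i) := by
      gcongr
      exact Finset.sq_sum_div_le_sum_sq_div _ _ fun i _ ↦ by linarith [hp0 i, hq0 i]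
    _ = ∑ i, 3 / 2 * ((p i - q i) ^ 2 / (p i + 2 * q i)) := by simp only [sq_abs, Finset.mul_sum]
    _ ≤ ∑ i, q i * klFun (p i / q i) :=
      Finset.sum_le_sum fun i _ ↦ three_halves_mul_sq_sub_div_le_mul_klFun_div (hp0 i) (hq0 i)
    _ = KLdiv p q := (KLdiv_eq_sum_mul_klFun (fun i ↦ (hq0 i).ne') (hp1.trans hq1.symm)).symm
end

section
/- Let p, q be probability vectors on Fin n (nonnegative entries summing to 1), let m = (p + q)/2, and define the Jensen–Shannon divergence JS(p,q) = (1/2)·Σ_i p_i·log(p_i/m_i) + (1/2)·Σ_i q_i·log(q_i/m_i), with the convention that terms with p_i = 0 (resp. q_i = 0) contribute 0. Then JS(p,q) ≥ (1/8)·(Σ_i |p_i − q_i|)²; that is, the Jensen–Shannon discrepancy dominates one eighth of the squared ℓ¹ distance between the two assignments. -/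
/-- Jensen–Shannon divergence of two vectors on `Fin n`, with midpoint
`m = (p+q)/2`. Terms with `p i = 0` (resp. `q i = 0`) contribute `0`
since they are multiplied by the zero coefficient. -/
noncomputable def JSdiv {n : ℕ} (p q : Fin n → ℝ) : ℝ :=
  (1 / 2) * ∑ i, p i * Real.log (p i / ((p i + q i) / 2)) +
  (1 / 2) * ∑ i, q i * Real.log (q i / ((p i + q i) / 2))

/-!
Write a pair `a, b ≥ 0` as `a = m (1 + t)`, `b = m (1 - t)` with `m = (a + b) / 2` and
`|t| ≤ 1`. Then `a log (a / m) + b log (b / m) = m ((1 + t) log (1 + t) + (1 - t) log (1 - t))`,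
which is at least `m t²` because the derivative `log (1 + t) - log (1 - t) - 2 t` of the
difference is a power series with nonnegative coefficients. Summing over coordinates gives
`JS(p, q) ≥ Δ / 4` for the triangular discrimination `Δ = Σ (p i - q i)² / (p i + q i)`, and
Cauchy–Schwarz with the weights `p i + q i`, whose total is `2`, gives `(Σ |p i - q i|)² ≤ 2 Δ`.
-/

open Real Finset

theorem two_mul_le_log_one_add_sub_log_one_sub {x : ℝ} (h0 : 0 ≤ x) (h1 : x < 1) :
    2 * x ≤ log (1 + x) - log (1 - x) := by
  have hs := hasSum_log_sub_log_of_abs_lt_one (abs_lt.2 ⟨by linarith, h1⟩)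
  simpa using le_hasSum hs 0 fun k _ => by positivity

theorem sq_le_mul_log_one_add_add_mul_log_one_sub {t : ℝ} (ht : |t| ≤ 1) :
    t ^ 2 ≤ (1 + t) * log (1 + t) + (1 - t) * log (1 - t) := by
  wlog h0 : 0 ≤ t generalizing t
  · have := this (t := -t) (by rwa [abs_neg]) (by linarith)
    rw [neg_sq, sub_neg_eq_add, ← sub_eq_add_neg] at this
    linarith
  set φ : ℝ → ℝ := fun t => (1 + t) * log (1 + t) + (1 - t) * log (1 - t) - t ^ 2
  have hφ : MonotoneOn φ (Set.Icc 0 1) := by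
    refine monotoneOn_of_hasDerivWithinAt_nonneg (convex_Icc 0 1)
      (f' := fun x => log (1 + x) - log (1 - x) - 2 * x) ?_ (fun x hx => ?_) (fun x hx => ?_)
    · exact ((continuous_mul_log.comp (continuous_const.add continuous_id)).add
        (continuous_mul_log.comp (continuous_const.sub continuous_id))).sub
        (continuous_pow 2) |>.continuousOn
    · rw [interior_Icc] at hx
      have hplus := (hasDerivAt_mul_log (by linarith [hx.1] : (1 + x) ≠ 0)).comp x
        ((hasDerivAt_id x).const_add 1)
      have hminus := (hasDerivAt_mul_log (by linarith [hx.2] : (1 - x) ≠ 0)).comp x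
        ((hasDerivAt_id x).const_sub 1)
      exact (((hplus.add hminus).sub (hasDerivAt_pow 2 x)).congr_deriv
        (by norm_num; ring)).hasDerivWithinAt
    · rw [interior_Icc] at hx
      linarith [two_mul_le_log_one_add_sub_log_one_sub hx.1.le hx.2]
  simpa [φ, sub_nonneg] using hφ ⟨le_rfl, zero_le_one⟩ ⟨h0, (abs_le.1 ht).2⟩ h0

theorem sq_sub_div_add_le_two_mul_jensenShannon_term {a b : ℝ} (ha : 0 ≤ a) (hb : 0 ≤ b) :
    (a - b) ^ 2 / (a + b) ≤
      2 * (a * log (a / ((a + b) / 2)) + b * log (b / ((a + b) / 2))) := by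
  rcases (add_nonneg ha hb).eq_or_lt' with hab | hab
  · obtain ⟨rfl, rfl⟩ : a = 0 ∧ b = 0 := ⟨by linarith, by linarith⟩
    simp
  set t := (a - b) / (a + b) with ht_def
  have ht : |t| ≤ 1 := by
    rw [abs_div, abs_of_pos hab, div_le_one hab, abs_le]
    constructor <;> linarith
  have hplus : a / ((a + b) / 2) = 1 + t := by rw [ht_def]; field_simp; ring
  have hminus : b / ((a + b) / 2) = 1 - t := by rw [ht_def]; field_simp; ring
  rw [hplus, hminus]
  calc (a - b) ^ 2 / (a + b) = (a + b) * t ^ 2 := by rw [ht_def]; field_simp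
    _ ≤ (a + b) * ((1 + t) * log (1 + t) + (1 - t) * log (1 - t)) :=
      mul_le_mul_of_nonneg_left (sq_le_mul_log_one_add_add_mul_log_one_sub ht) hab.le
    _ = 2 * (a * log (1 + t) + b * log (1 - t)) := by
      rw [ht_def]; field_simp; ring

noncomputable def triangularDiscrimination {ι : Type*} [Fintype ι] (p q : ι → ℝ) : ℝ :=
  ∑ i, (p i - q i) ^ 2 / (p i + q i)

theorem sq_sum_abs_sub_le_triangularDiscrimination_mul {ι : Type*} [Fintype ι] (p q : ι → ℝ)
    (hp : ∀ i, 0 ≤ p i) (hq : ∀ i, 0 ≤ q i) :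
    (∑ i, |p i - q i|) ^ 2 ≤ triangularDiscrimination p q * ∑ i, (p i + q i) := by
  have hpq i : 0 ≤ p i + q i := add_nonneg (hp i) (hq i)
  refine sum_sq_le_sum_mul_sum_of_sq_le_mul _ (fun i _ => div_nonneg (sq_nonneg _) (hpq i))
    (fun i _ => hpq i) fun i _ => ?_
  rcases (hpq i).eq_or_lt' with h | h
  · obtain ⟨hpi, hqi⟩ : p i = 0 ∧ q i = 0 := by constructor <;> linarith [hp i, hq i]
    simp [hpi, hqi]
  · rw [sq_abs, div_mul_cancel₀ _ h.ne']

theorem triangularDiscrimination_le_four_mul_JSdiv {n : ℕ} (p q : Fin n → ℝ)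
    (hp : ∀ i, 0 ≤ p i) (hq : ∀ i, 0 ≤ q i) :
    triangularDiscrimination p q ≤ 4 * JSdiv p q := by
  calc triangularDiscrimination p q
      ≤ ∑ i, 2 * (p i * log (p i / ((p i + q i) / 2)) + q i * log (q i / ((p i + q i) / 2))) :=
        sum_le_sum fun i _ => sq_sub_div_add_le_two_mul_jensenShannon_term (hp i) (hq i)
    _ = 4 * JSdiv p q := by
      rw [JSdiv, ← mul_sum, sum_add_distrib]; ring

/-- **Jensen–Shannon divergence dominates one eighth of the squared ℓ¹ distance.**
For probability vectors `p, q` on `Fin n` (nonnegative entries summing to `1`),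
`JS(p,q) ≥ (1/8)·(Σ_i |p i − q i|)²`. -/
theorem JSdiv_ge_one_eighth_sq_l1
    {n : ℕ} (p q : Fin n → ℝ)
    (hp0 : ∀ i, 0 ≤ p i) (hp1 : ∑ i, p i = 1)
    (hq0 : ∀ i, 0 ≤ q i) (hq1 : ∑ i, q i = 1) :
    (1 / 8) * (∑ i, |p i - q i|) ^ 2 ≤ JSdiv p q := by
  have hmass : ∑ i, (p i + q i) = 2 := by rw [sum_add_distrib, hp1, hq1]; norm_num
  calc (1 / 8) * (∑ i, |p i - q i|) ^ 2
      ≤ (1 / 8) * (triangularDiscrimination p q * ∑ i, (p i + q i)) := by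
        gcongr; exact sq_sum_abs_sub_le_triangularDiscrimination_mul p q hp0 hq0
    _ = triangularDiscrimination p q / 4 := by rw [hmass]; ring
    _ ≤ JSdiv p q := by linarith [triangularDiscrimination_le_four_mul_JSdiv p q hp0 hq0]
end
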